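/- arXiv:1102.0625 — 5 statements merged into one kernel-verified Lean document; each statement's English description precedes it below -/
import Mathlib

section
/- For k > 0 and μ > 0, the function f(x) = (2πkx)^{-1/2} · exp(-(x-μ)²/(2kx)) on (0,∞) integrates to 1, i.e., ∫₀^∞ f(x) dx = 1. -/
/-!
Substituting `x = t ^ 2` turns the density into `2 / √(2πk) · exp (-(t - μ / t) ^ 2 / (2k))`.
The map `t ↦ t - μ / t` is a bijection `(0, ∞) → ℝ` whose inverse has derivative
`w u = (1 + u / √(u ^ 2 + 4μ)) / 2`, and `w u + w (-u) = 1`; hence for even integrable `F`,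
`∫₀^∞ F (t - μ / t) dt = ½ ∫ F` (Cauchy–Schlömilch), and the Gaussian integral gives `1`.
-/

open Real MeasureTheory Set

/-- The positive root of `t ^ 2 - u * t - a`, i.e. the inverse of `t ↦ t - a / t` on `(0, ∞)`. -/
noncomputable def subDivInv (a u : ℝ) : ℝ := (u + √(u ^ 2 + 4 * a)) / 2

section SubDivInv

variable {a : ℝ}

lemma abs_lt_sqrt_sq_add (ha : 0 < a) (u : ℝ) : |u| < √(u ^ 2 + 4 * a) := by
  rw [← sqrt_sq_eq_abs]
  exact sqrt_lt_sqrt (sq_nonneg u) (by linarith)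

lemma abs_div_sqrt_sq_add_le (ha : 0 ≤ a) (u : ℝ) : |u / √(u ^ 2 + 4 * a)| ≤ 1 := by
  rw [abs_div, abs_of_nonneg (sqrt_nonneg _)]
  exact div_le_one_of_le₀ (abs_le_sqrt (by linarith)) (sqrt_nonneg _)

lemma subDivInv_pos (ha : 0 < a) (u : ℝ) : 0 < subDivInv a u := by
  have := abs_lt_sqrt_sq_add ha u
  unfold subDivInv
  linarith [neg_abs_le u]

lemma subDivInv_sub_div (ha : 0 < a) (u : ℝ) : subDivInv a u - a / subDivInv a u = u := by
  have hs := (subDivInv_pos ha u).ne'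
  have hroot : subDivInv a u ^ 2 - u * subDivInv a u = a := by
    unfold subDivInv
    linear_combination (sq_sqrt (by positivity : 0 ≤ u ^ 2 + 4 * a)) / 4
  field_simp
  linarith

lemma subDivInv_sub_div_self (ha : 0 ≤ a) {t : ℝ} (ht : 0 < t) :
    subDivInv a (t - a / t) = t := by
  have hsq : (t - a / t) ^ 2 + 4 * a = (t + a / t) ^ 2 := by
    field_simp
    ring
  rw [subDivInv, hsq, sqrt_sq (by positivity)]
  ring

lemma range_subDivInv (ha : 0 < a) : range (subDivInv a) = Ioi 0 := by
  refine Subset.antisymm (range_subset_iff.2 (subDivInv_pos ha)) fun t ht ↦ ?_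
  exact ⟨t - a / t, subDivInv_sub_div_self ha.le ht⟩

lemma subDivInv_injective (ha : 0 < a) : Function.Injective (subDivInv a) :=
  Function.LeftInverse.injective (g := fun t ↦ t - a / t) (subDivInv_sub_div ha)

lemma hasDerivAt_subDivInv (ha : 0 < a) (u : ℝ) :
    HasDerivAt (subDivInv a) ((1 + u / √(u ^ 2 + 4 * a)) / 2) u := by
  have hpos : 0 < u ^ 2 + 4 * a := by positivity
  have hsqrt : HasDerivAt (fun u ↦ √(u ^ 2 + 4 * a)) (u / √(u ^ 2 + 4 * a)) u := by
    convert ((hasDerivAt_pow 2 u).add_const (4 * a)).sqrt hpos.ne' using 1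
    field_simp
    ring
  exact ((hasDerivAt_id u).add hsqrt).div_const 2

end SubDivInv

section ChangeOfVariables

variable {E : Type*} [NormedAddCommGroup E] [NormedSpace ℝ E] {a : ℝ}

theorem integral_Ioi_comp_sub_div (ha : 0 < a) (F : ℝ → E) :
    ∫ t in Ioi 0, F (t - a / t) = ∫ u, ((1 + u / √(u ^ 2 + 4 * a)) / 2) • F u := by
  have hcov := integral_image_eq_integral_abs_deriv_smul MeasurableSet.univ
    (fun u _ ↦ (hasDerivAt_subDivInv ha u).hasDerivWithinAt) (subDivInv_injective ha).injOn
    (fun t ↦ F (t - a / t))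
  rw [image_univ, range_subDivInv ha, Measure.restrict_univ] at hcov
  rw [hcov]
  congr 1 with u
  have := abs_le.1 (abs_div_sqrt_sq_add_le ha.le u)
  rw [subDivInv_sub_div ha, abs_of_nonneg (by linarith)]

theorem integral_Ioi_comp_sub_div_of_even (ha : 0 < a) {F : ℝ → E} (hF : Integrable F)
    (heven : ∀ u, F (-u) = F u) :
    ∫ t in Ioi 0, F (t - a / t) = (2 : ℝ)⁻¹ • ∫ u, F u := by
  set w : ℝ → ℝ := fun u ↦ (1 + u / √(u ^ 2 + 4 * a)) / 2
  have hw_sum : ∀ u, w u + w (-u) = 1 := fun u ↦ by simp only [w, neg_sq]; ring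
  have hwF : Integrable (fun u ↦ w u • F u) := by
    refine hF.bdd_smul 1 (by fun_prop) (Filter.Eventually.of_forall fun u ↦ ?_)
    have := abs_le.1 (abs_div_sqrt_sq_add_le ha.le u)
    rw [norm_eq_abs, abs_le]
    constructor <;> simp only [w] <;> linarith
  have hwF_neg : Integrable (fun u ↦ w (-u) • F u) := by
    simpa only [heven] using hwF.comp_neg
  have hreflect : ∫ u, w u • F u = ∫ u, w (-u) • F u := by
    simpa only [heven] using (integral_neg_eq_self (fun u ↦ w u • F u) volume).symm
  rw [integral_Ioi_comp_sub_div ha, eq_inv_smul_iff₀ two_ne_zero, two_smul]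
  nth_rewrite 2 [hreflect]
  rw [← integral_add hwF hwF_neg]
  simp only [← add_smul, hw_sum, one_smul]

lemma integral_Ioi_eq_integral_Ioi_comp_sq (g : ℝ → E) :
    ∫ x in Ioi 0, g x = ∫ t in Ioi 0, (2 * t) • g (t ^ 2) := by
  rw [← integral_comp_rpow_Ioi_of_pos (g := g) two_pos]
  refine setIntegral_congr_fun measurableSet_Ioi fun t _ ↦ ?_
  norm_num

end ChangeOfVariables

theorem unlikely_density_normalization (k μ : ℝ) (hk : 0 < k) (hμ : 0 < μ) :
    ∫ x in Set.Ioi (0:ℝ),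
      (Real.sqrt (2 * Real.pi * k * x))⁻¹ * Real.exp (-(x - μ)^2 / (2 * k * x)) = 1 := by
  have hsubst : ∀ t ∈ Ioi (0 : ℝ),
      (2 * t) • ((√(2 * π * k * t ^ 2))⁻¹ * exp (-(t ^ 2 - μ) ^ 2 / (2 * k * t ^ 2)))
        = 2 / √(2 * π * k) * exp (-(2 * k)⁻¹ * (t - μ / t) ^ 2) := by
    intro t (ht : 0 < t)
    rw [smul_eq_mul, sqrt_mul (by positivity), sqrt_sq ht.le]
    field_simp
  rw [integral_Ioi_eq_integral_Ioi_comp_sq, setIntegral_congr_fun measurableSet_Ioi hsubst,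
    integral_const_mul, integral_Ioi_comp_sub_div_of_even hμ
      (integrable_exp_neg_mul_sq (by positivity)) (fun u ↦ by simp only [neg_sq]),
    integral_gaussian, div_inv_eq_mul, smul_eq_mul]
  field_simp
end

section
/- For a > 0, ∫₀^∞ exp(-a²/z² - z²) dz = (√π / 2) · e^{-2a}. -/
open Real MeasureTheory Set

/-!
Since `-(a/z)² - z² = -2a - (z - a/z)²`, it suffices to show `∫₀^∞ exp(-(z - a/z)²) dz = √π/2`.
The map `z ↦ z - a/z` is an increasing bijection of `(0, ∞)` onto `ℝ` with derivative
`1 + a/z²` (Cauchy–Schlömilch substitution), and the inversion `z ↦ a/z` turns the `a/z² dz`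
part into `∫₀^∞ f(a/z - z) dz`. Hence `∫₀^∞ f(z - a/z) + ∫₀^∞ f(a/z - z) = ∫_ℝ f`, and for the
even integrand `exp(-u²)` both terms on the left are the integral we want.
-/

section CauchySchlomilch

variable {E : Type*} [NormedAddCommGroup E] [NormedSpace ℝ E] {a : ℝ}

lemma hasDerivAt_const_div {z : ℝ} (hz : z ≠ 0) :
    HasDerivAt (fun z => a / z) (-(a / z ^ 2)) z := by
  simpa [div_eq_mul_inv] using (hasDerivAt_inv hz).const_mul a

lemma hasDerivAt_sub_div {z : ℝ} (hz : z ≠ 0) :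
    HasDerivAt (fun z => z - a / z) (1 + a / z ^ 2) z := by
  simpa using (hasDerivAt_id' z).fun_sub (hasDerivAt_const_div hz)

lemma strictMonoOn_sub_div (ha : 0 ≤ a) : StrictMonoOn (fun z => z - a / z) (Ioi 0) := by
  intro x hx y hy hxy
  have : a / y ≤ a / x := div_le_div_of_nonneg_left ha hx hxy.le
  simp only
  linarith

lemma image_sub_div_Ioi (ha : 0 < a) : (fun z => z - a / z) '' Ioi 0 = univ := by
  refine eq_univ_of_forall fun u => ?_
  -- the positive root of `z ^ 2 - u * z - a`
  set z := (u + √(u ^ 2 + 4 * a)) / 2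
  have hroot : √(u ^ 2 + 4 * a) ^ 2 = u ^ 2 + 4 * a := sq_sqrt (by positivity)
  have hz : 0 < z := by
    have : |u| < √(u ^ 2 + 4 * a) := by
      rw [← sqrt_sq_eq_abs]; exact sqrt_lt_sqrt (sq_nonneg u) (by linarith)
    have := neg_abs_le u
    simp only [z]; linarith
  refine ⟨z, hz, ?_⟩
  field_simp
  simp only [z]
  nlinarith

lemma strictAntiOn_const_div (ha : 0 < a) : StrictAntiOn (fun z => a / z) (Ioi 0) :=
  fun _ hx _ _ hxy => div_lt_div_of_pos_left ha hx hxy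

lemma image_const_div_Ioi (ha : 0 < a) : (fun z => a / z) '' Ioi 0 = Ioi 0 := by
  refine Subset.antisymm (image_subset_iff.2 fun z hz => div_pos ha hz) fun w hw => ?_
  exact ⟨a / w, div_pos ha hw, div_div_cancel₀ ha.ne'⟩

lemma integral_eq_integral_Ioi_smul_comp_sub_div (ha : 0 < a) (f : ℝ → E) :
    ∫ u, f u = ∫ z in Ioi 0, (1 + a / z ^ 2) • f (z - a / z) := by
  have := integral_image_eq_integral_abs_deriv_smul measurableSet_Ioi
    (fun z hz => (hasDerivAt_sub_div (ne_of_gt hz)).hasDerivWithinAt)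
    (strictMonoOn_sub_div ha.le).injOn f
  rw [image_sub_div_Ioi ha, setIntegral_univ] at this
  rw [this]
  refine setIntegral_congr_fun measurableSet_Ioi fun z _ => ?_
  rw [abs_of_pos (by positivity)]

lemma integrableOn_Ioi_smul_comp_sub_div (ha : 0 < a) {f : ℝ → E} (hf : Integrable f) :
    IntegrableOn (fun z => (1 + a / z ^ 2) • f (z - a / z)) (Ioi 0) := by
  have := (integrableOn_image_iff_integrableOn_abs_deriv_smul measurableSet_Ioi
    (fun z hz => (hasDerivAt_sub_div (ne_of_gt hz)).hasDerivWithinAt)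
    (strictMonoOn_sub_div ha.le).injOn f).1 (by rw [image_sub_div_Ioi ha]; exact hf.integrableOn)
  refine this.congr_fun (fun z _ => ?_) measurableSet_Ioi
  dsimp only
  rw [abs_of_pos (by positivity)]

lemma integrableOn_Ioi_comp_sub_div (ha : 0 < a) {f : ℝ → E} (hf : Integrable f) :
    IntegrableOn (fun z => f (z - a / z)) (Ioi 0) := by
  have hbound : ∀ z : ℝ, ‖(1 + a / z ^ 2)⁻¹‖ ≤ 1 := fun z => by
    rw [norm_inv, Real.norm_of_nonneg (by positivity)]
    exact inv_le_one_of_one_le₀ (le_add_of_nonneg_right (by positivity))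
  refine IntegrableOn.congr_fun ((integrableOn_Ioi_smul_comp_sub_div ha hf).bdd_smul 1
    (by fun_prop : Measurable _).aestronglyMeasurable (ae_of_all _ hbound))
    (fun z _ => ?_) measurableSet_Ioi
  simp only [Pi.smul_apply', smul_smul]
  rw [inv_mul_cancel₀ (by positivity), one_smul]

theorem integral_Ioi_comp_sub_div_add (ha : 0 < a) {f : ℝ → E} (hf : Integrable f) :
    (∫ z in Ioi 0, f (z - a / z)) + ∫ z in Ioi 0, f (a / z - z) = ∫ u, f u := by
  have hJ := integrableOn_Ioi_comp_sub_div ha hf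
  have hK : IntegrableOn (fun z => (a / z ^ 2) • f (z - a / z)) (Ioi 0) :=
    ((integrableOn_Ioi_smul_comp_sub_div ha hf).sub hJ).congr_fun
      (fun z _ => by simp only [Pi.sub_apply, add_smul, one_smul, add_sub_cancel_left])
      measurableSet_Ioi
  have hinv := integral_image_eq_integral_abs_deriv_smul measurableSet_Ioi
    (fun z hz => (hasDerivAt_const_div (ne_of_gt hz)).hasDerivWithinAt)
    (strictAntiOn_const_div ha).injOn (fun w => f (a / w - w))
  rw [image_const_div_Ioi ha] at hinv
  calc (∫ z in Ioi 0, f (z - a / z)) + ∫ z in Ioi 0, f (a / z - z)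
      = (∫ z in Ioi 0, f (z - a / z)) + ∫ z in Ioi 0, (a / z ^ 2) • f (z - a / z) := by
        rw [hinv]
        congr 1
        refine setIntegral_congr_fun measurableSet_Ioi fun z (hz : 0 < z) => ?_
        rw [abs_neg, abs_of_pos (by positivity), div_div_cancel₀ ha.ne']
    _ = ∫ u, f u := by
        rw [← integral_add hJ hK, integral_eq_integral_Ioi_smul_comp_sub_div ha]
        simp only [add_smul, one_smul]

end CauchySchlomilch

lemma integral_Ioi_exp_neg_sq_sub_div {a : ℝ} (ha : 0 < a) :
    ∫ z in Ioi 0, exp (-(z - a / z) ^ 2) = √π / 2 := by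
  have := integral_Ioi_comp_sub_div_add ha (f := fun u => exp (-u ^ 2))
    (by simpa using integrable_exp_neg_mul_sq one_pos)
  simp only [← neg_sub _ (a / _), neg_sq] at this
  have hπ : ∫ u : ℝ, exp (-u ^ 2) = √π := by simpa using integral_gaussian 1
  linarith

theorem gaussian_type_integral (a : ℝ) (ha : 0 < a) :
    ∫ z in Set.Ioi (0:ℝ), Real.exp (-(a / z)^2 - z^2)
      = (Real.sqrt Real.pi / 2) * Real.exp (-2 * a) := by
  calc ∫ z in Ioi 0, exp (-(a / z) ^ 2 - z ^ 2)
      = ∫ z in Ioi 0, exp (-2 * a) * exp (-(z - a / z) ^ 2) := by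
        refine setIntegral_congr_fun measurableSet_Ioi fun z (hz : 0 < z) => ?_
        rw [← exp_add]
        congr 1
        field_simp
        ring
    _ = √π / 2 * exp (-2 * a) := by
        rw [integral_const_mul, integral_Ioi_exp_neg_sq_sub_div ha, mul_comm]
end

section
/- If X has density f(x) = (2πkx)^{-1/2} exp(-(x-μ)²/(2kx)) on (0,∞) with k, μ > 0, then E(1/X) = 1/μ, i.e., ∫₀^∞ (1/x) f(x) dx = 1/μ. -/
/-!
For `f = unlikelyDensity k μ`, the inversion `x ↦ μ² / x` carries `f(x) dx` to
`(μ / x) f(x) dx`, so `∫ f = ∫ (μ / x) f`. The substitution `t = (x - μ) / √(2kx)`, with `dt = (1 + μ / x) / (2√(2kx)) dx`, turns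
`∫ (1 + μ / x) f` into `(2 / √π) ∫ exp (-t²) dt = 2`. Hence `∫ (μ / x) f = 1`.
-/

open Real MeasureTheory Set

theorem integral_Ioi_div_sq_smul_comp_div {E : Type*} [NormedAddCommGroup E] [NormedSpace ℝ E]
    {c : ℝ} (hc : 0 < c) (g : ℝ → E) :
    ∫ x in Ioi 0, (c / x ^ 2) • g (c / x) = ∫ x in Ioi 0, g x := by
  have himage : (c / ·) '' Ioi (0 : ℝ) = Ioi 0 :=
    Subset.antisymm (image_subset_iff.2 fun x hx => div_pos hc hx)
      fun y hy => ⟨c / y, div_pos hc hy, div_div_cancel₀ hc.ne'⟩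
  have hderiv : ∀ x ∈ Ioi (0 : ℝ), HasDerivWithinAt (c / ·) (-c / x ^ 2) (Ioi 0) x := by
    intro x hx
    simpa [div_eq_mul_inv, neg_div] using
      ((hasDerivAt_inv (ne_of_gt hx)).const_mul c).hasDerivWithinAt
  have hinj : InjOn (c / ·) (Ioi (0 : ℝ)) := fun a _ b _ h => by
    simpa [div_div_cancel₀ hc.ne'] using congrArg (c / ·) h
  conv_rhs =>
    rw [← himage, integral_image_eq_integral_abs_deriv_smul measurableSet_Ioi hderiv hinj]
  refine setIntegral_congr_fun measurableSet_Ioi fun x _ => ?_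
  rw [abs_div, abs_neg, abs_of_pos hc, abs_of_nonneg (sq_nonneg x)]

theorem integrableOn_abs_deriv_mul_exp_neg_sq {s : Set ℝ} {φ φ' : ℝ → ℝ} (hs : MeasurableSet s)
    (hφ' : ∀ x ∈ s, HasDerivWithinAt φ (φ' x) s x) (hφ : InjOn φ s) (hφs : φ '' s = univ) :
    IntegrableOn (fun x => |φ' x| * exp (-φ x ^ 2)) s := by
  have h := integrableOn_image_iff_integrableOn_abs_deriv_smul hs hφ' hφ fun t => exp (-t ^ 2)
  rw [hφs, integrableOn_univ] at h
  simpa using h.1 (by simpa using integrable_exp_neg_mul_sq one_pos)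

theorem integral_abs_deriv_mul_exp_neg_sq {s : Set ℝ} {φ φ' : ℝ → ℝ} (hs : MeasurableSet s)
    (hφ' : ∀ x ∈ s, HasDerivWithinAt φ (φ' x) s x) (hφ : InjOn φ s) (hφs : φ '' s = univ) :
    ∫ x in s, |φ' x| * exp (-φ x ^ 2) = √π := by
  have h := integral_image_eq_integral_abs_deriv_smul hs hφ' hφ fun t => exp (-t ^ 2)
  rw [hφs, Measure.restrict_univ] at h
  simp only [smul_eq_mul] at h
  rw [← h]
  simpa using integral_gaussian 1

noncomputable def unlikelyDensity (k μ x : ℝ) : ℝ :=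
  (√(2 * π * k * x))⁻¹ * exp (-(x - μ) ^ 2 / (2 * k * x))

noncomputable def zScore (k μ x : ℝ) : ℝ := (x - μ) / √(2 * k * x)

theorem unlikelyDensity_nonneg (k μ x : ℝ) : 0 ≤ unlikelyDensity k μ x := by
  unfold unlikelyDensity; positivity

theorem unlikelyDensity_sq_div {k μ x : ℝ} (hμ : 0 < μ) (hx : 0 < x) :
    unlikelyDensity k μ (μ ^ 2 / x) = x / μ * unlikelyDensity k μ x := by
  have hr : 0 < μ / x := div_pos hμ hx
  have hsqrt : √(2 * π * k * (μ ^ 2 / x)) = √(2 * π * k * x) * (μ / x) := by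
    rw [← sqrt_sq hr.le, ← sqrt_mul']
    · congr 1; field_simp
    · positivity
  have hexp : -(μ ^ 2 / x - μ) ^ 2 / (2 * k * (μ ^ 2 / x)) = -(x - μ) ^ 2 / (2 * k * x) := by
    rw [show μ ^ 2 / x - μ = -(x - μ) * (μ / x) by field_simp; ring,
      show 2 * k * (μ ^ 2 / x) = 2 * k * x * (μ / x) ^ 2 by field_simp,
      neg_mul, neg_sq, mul_pow, ← neg_mul, mul_div_mul_right _ _ (pow_ne_zero 2 hr.ne')]
  rw [unlikelyDensity, unlikelyDensity, hsqrt, hexp, mul_inv, inv_div]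
  ring

theorem integral_div_mul_unlikelyDensity (k : ℝ) {μ : ℝ} (hμ : 0 < μ) :
    ∫ x in Ioi 0, μ / x * unlikelyDensity k μ x = ∫ x in Ioi 0, unlikelyDensity k μ x := by
  rw [← integral_Ioi_div_sq_smul_comp_div (pow_pos hμ 2)]
  refine setIntegral_congr_fun measurableSet_Ioi fun x (hx : 0 < x) => ?_
  rw [smul_eq_mul, unlikelyDensity_sq_div hμ hx]
  field_simp

theorem hasDerivAt_zScore {k x : ℝ} (μ : ℝ) (hk : 0 < k) (hx : 0 < x) :
    HasDerivAt (zScore k μ) ((1 + μ / x) / (2 * √(2 * k * x))) x := by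
  have hkx : 0 < 2 * k * x := by positivity
  have hs : 0 < √(2 * k * x) := sqrt_pos.2 hkx
  have hsqrt : HasDerivAt (fun x => √(2 * k * x)) (2 * k / (2 * √(2 * k * x))) x := by
    simpa [div_eq_inv_mul, mul_comm] using ((hasDerivAt_id x).const_mul (2 * k)).sqrt hkx.ne'
  refine (((hasDerivAt_id x).sub_const μ).div hsqrt hs.ne').congr_deriv ?_
  simp only [id]
  field_simp
  rw [sq_sqrt hkx.le]
  ring

theorem strictMonoOn_zScore {k μ : ℝ} (hk : 0 < k) (hμ : 0 < μ) :
    StrictMonoOn (zScore k μ) (Ioi 0) := by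
  refine strictMonoOn_of_deriv_pos (convex_Ioi 0) ?_ fun x hx => ?_
  · exact fun x (hx : 0 < x) => (hasDerivAt_zScore μ hk hx).continuousAt.continuousWithinAt
  · rw [interior_Ioi, mem_Ioi] at hx
    rw [(hasDerivAt_zScore μ hk hx).deriv]
    have : 0 < √(2 * k * x) := sqrt_pos.2 (by positivity)
    positivity

theorem zScore_image_Ioi {k μ : ℝ} (hk : 0 < k) (hμ : 0 < μ) : zScore k μ '' Ioi 0 = univ := by
  refine eq_univ_of_forall fun t => ?_
  set b := t * √(2 * k)
  set s := (b + √(b ^ 2 + 4 * μ)) / 2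
  have hd : √(b ^ 2 + 4 * μ) ^ 2 = b ^ 2 + 4 * μ := sq_sqrt (by positivity)
  have hs : 0 < s := by
    show 0 < (b + _) / 2
    have : |b| < √(b ^ 2 + 4 * μ) := by
      rw [← sqrt_sq_eq_abs]; exact sqrt_lt_sqrt (sq_nonneg _) (by linarith)
    linarith [neg_abs_le b]
  have hroot : s ^ 2 - μ = b * s := by linear_combination hd / 4
  refine ⟨s ^ 2, mem_Ioi.2 (by positivity), ?_⟩
  have hk2 : 0 < √(2 * k) := sqrt_pos.2 (by positivity)
  rw [zScore, sqrt_mul (by positivity), sqrt_sq hs.le, hroot]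
  field_simp
  exact mul_comm _ _

theorem one_add_div_mul_unlikelyDensity {k μ x : ℝ} (hk : 0 < k) (hμ : 0 < μ) (hx : 0 < x) :
    (1 + μ / x) * unlikelyDensity k μ x
      = 2 / √π * (|(1 + μ / x) / (2 * √(2 * k * x))| * exp (-zScore k μ x ^ 2)) := by
  have hkx : 0 < 2 * k * x := by positivity
  have hs : 0 < √(2 * k * x) := sqrt_pos.2 hkx
  have hexp : -zScore k μ x ^ 2 = -(x - μ) ^ 2 / (2 * k * x) := by
    rw [zScore, div_pow, sq_sqrt hkx.le, neg_div]
  have hsqrt : √(2 * π * k * x) = √π * √(2 * k * x) := by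
    rw [← sqrt_mul pi_pos.le]; ring_nf
  rw [abs_of_pos (by positivity), hexp, unlikelyDensity, hsqrt]
  field_simp

theorem integrableOn_one_add_div_mul_unlikelyDensity {k μ : ℝ} (hk : 0 < k) (hμ : 0 < μ) :
    IntegrableOn (fun x => (1 + μ / x) * unlikelyDensity k μ x) (Ioi 0) := by
  have h := integrableOn_abs_deriv_mul_exp_neg_sq measurableSet_Ioi
    (fun x (hx : 0 < x) => (hasDerivAt_zScore μ hk hx).hasDerivWithinAt)
    (strictMonoOn_zScore hk hμ).injOn (zScore_image_Ioi hk hμ)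
  exact IntegrableOn.congr_fun (h.const_mul (2 / √π))
    (fun x (hx : 0 < x) => (one_add_div_mul_unlikelyDensity hk hμ hx).symm) measurableSet_Ioi

theorem integral_one_add_div_mul_unlikelyDensity {k μ : ℝ} (hk : 0 < k) (hμ : 0 < μ) :
    ∫ x in Ioi 0, (1 + μ / x) * unlikelyDensity k μ x = 2 := by
  rw [setIntegral_congr_fun measurableSet_Ioi
    fun x (hx : 0 < x) => one_add_div_mul_unlikelyDensity hk hμ hx, integral_const_mul,
    integral_abs_deriv_mul_exp_neg_sq measurableSet_Ioi
      (fun x (hx : 0 < x) => (hasDerivAt_zScore μ hk hx).hasDerivWithinAt)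
      (strictMonoOn_zScore hk hμ).injOn (zScore_image_Ioi hk hμ)]
  field_simp [(sqrt_pos.2 pi_pos).ne']

theorem integrableOn_unlikelyDensity {k μ : ℝ} (hk : 0 < k) (hμ : 0 < μ) :
    IntegrableOn (unlikelyDensity k μ) (Ioi 0) := by
  refine (integrableOn_one_add_div_mul_unlikelyDensity hk hμ).mono'
    (by unfold unlikelyDensity; fun_prop)
    ((ae_restrict_iff' measurableSet_Ioi).2 (ae_of_all _ fun x (hx : 0 < x) => ?_))
  have hf := unlikelyDensity_nonneg k μ x
  rw [norm_of_nonneg hf]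
  exact le_mul_of_one_le_left hf (le_add_of_nonneg_right (by positivity))

theorem integral_div_mul_unlikelyDensity_eq_one {k μ : ℝ} (hk : 0 < k) (hμ : 0 < μ) :
    ∫ x in Ioi 0, μ / x * unlikelyDensity k μ x = 1 := by
  have hf := integrableOn_unlikelyDensity hk hμ
  have hg : IntegrableOn (fun x => μ / x * unlikelyDensity k μ x) (Ioi 0) := by
    simpa only [add_mul, one_mul, Pi.sub_def, add_sub_cancel_left] using
      (integrableOn_one_add_div_mul_unlikelyDensity hk hμ).sub hf
  have hsum := integral_one_add_div_mul_unlikelyDensity hk hμ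
  simp only [add_mul, one_mul] at hsum
  rw [integral_add hf hg, ← integral_div_mul_unlikelyDensity k hμ] at hsum
  linarith

theorem unlikely_density_harmonic_mean (k μ : ℝ) (hk : 0 < k) (hμ : 0 < μ) :
    ∫ x in Set.Ioi (0:ℝ),
      (1 / x) * ((Real.sqrt (2 * Real.pi * k * x))⁻¹ * Real.exp (-(x - μ)^2 / (2 * k * x)))
      = 1 / μ := by
  calc ∫ x in Ioi 0, 1 / x * unlikelyDensity k μ x
      = μ⁻¹ * ∫ x in Ioi 0, μ / x * unlikelyDensity k μ x := by
        rw [← integral_const_mul]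
        congr 1 with x
        field_simp
    _ = 1 / μ := by rw [integral_div_mul_unlikelyDensity_eq_one hk hμ, one_div, mul_one]
end

section
/- If X has density f(x) = (2πkx)^{-1/2} exp(-(x-μ)²/(2kx)) on (0,∞) with k, μ > 0, then E(X) = k + μ. -/
/-!
Substitute `x = ψ(u)²`, where `ψ(u) > 0` solves `ψ - μ / ψ = u`. Since `(x - μ)² / x = u²`, the
mean becomes `∫ 2 ψ(u)³ / √(u² + 4μ) · φ(u) du` with `φ` the centred Gaussian density of
variance `k`. The roots for `u` and `-u` satisfy `ψ(u) ψ(-u) = μ` and `ψ(u) - ψ(-u) = u`, so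
`ψ(u)³ + ψ(-u)³ = √(u² + 4μ) (u² + μ)`; since `φ` is even the integral therefore equals
`∫ (u² + μ) φ(u) du = k + μ`.
-/

open Real MeasureTheory Set ProbabilityTheory
open scoped NNReal

lemma integrable_of_nonneg_of_add_comp_neg {f g : ℝ → ℝ} (hf : AEStronglyMeasurable f)
    (hf0 : ∀ x, 0 ≤ f x) (hg : Integrable g) (h : ∀ x, f x + f (-x) = 2 * g x) :
    Integrable f :=
  (hg.const_mul 2).mono hf <| ae_of_all _ fun x => by
    rw [Real.norm_of_nonneg (hf0 x), ← h x, Real.norm_of_nonneg (by linarith [hf0 x, hf0 (-x)])]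
    linarith [hf0 (-x)]

lemma integral_eq_of_add_comp_neg {f g : ℝ → ℝ} (hf : Integrable f)
    (h : ∀ x, f x + f (-x) = 2 * g x) : ∫ x, f x = ∫ x, g x := by
  have : 2 * ∫ x, f x = 2 * ∫ x, g x :=
    calc 2 * ∫ x, f x = (∫ x, f x) + ∫ x, f (-x) := by rw [integral_neg_eq_self]; ring
      _ = ∫ x, 2 * g x := by rw [← integral_add hf hf.comp_neg]; simp only [h]
      _ = 2 * ∫ x, g x := integral_const_mul 2 g
  linarith

section Gaussian

lemma gaussianPDFReal_zero_apply_neg (v : ℝ≥0) (x : ℝ) :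
    gaussianPDFReal 0 v (-x) = gaussianPDFReal 0 v x := by
  simp only [gaussianPDFReal, sub_zero, neg_sq]

lemma integral_sq_gaussianReal_zero (v : ℝ≥0) : ∫ x, x ^ 2 ∂gaussianReal 0 v = v := by
  simpa using (variance_eq_integral measurable_id.aemeasurable).symm.trans
    (variance_id_gaussianReal (μ := 0) (v := v))

variable {v : ℝ≥0} (hv : v ≠ 0) (c : ℝ)
include hv

lemma integrable_sq_add_const_mul_gaussianPDFReal :
    Integrable (fun x => (x ^ 2 + c) * gaussianPDFReal 0 v x) := by
  have h : Integrable (fun x : ℝ => x ^ 2 + c) (gaussianReal 0 v) :=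
    (memLp_id_gaussianReal 2).integrable_sq.add (integrable_const c)
  rw [gaussianReal_of_var_ne_zero 0 hv, integrable_withDensity_iff_integrable_smul'
    (measurable_gaussianPDF 0 v) (ae_of_all _ fun _ => gaussianPDF_lt_top)] at h
  simpa only [toReal_gaussianPDF, smul_eq_mul, mul_comm] using h

lemma integral_sq_add_const_mul_gaussianPDFReal :
    ∫ x, (x ^ 2 + c) * gaussianPDFReal 0 v x = v + c := by
  have hsq : Integrable (fun x : ℝ => x ^ 2) (gaussianReal 0 v) :=
    (memLp_id_gaussianReal 2).integrable_sq
  simp_rw [mul_comm _ (gaussianPDFReal 0 v _), ← smul_eq_mul,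
    ← integral_gaussianReal_eq_integral_smul hv]
  rw [integral_add hsq (integrable_const c), integral_sq_gaussianReal_zero]
  simp

end Gaussian

/-- The inverse of `t ↦ t - μ / t` on `(0, ∞)`. -/
noncomputable def posRoot (μ u : ℝ) : ℝ := (u + √(u ^ 2 + 4 * μ)) / 2

section PosRoot

variable {μ : ℝ}

lemma posRoot_pos (hμ : 0 < μ) (u : ℝ) : 0 < posRoot μ u := by
  have : |u| < √(u ^ 2 + 4 * μ) := (Real.lt_sqrt (abs_nonneg u)).2 (by rw [sq_abs]; linarith)
  unfold posRoot
  linarith [neg_abs_le u]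

lemma posRoot_sq (hμ : 0 ≤ μ) (u : ℝ) : posRoot μ u ^ 2 = u * posRoot μ u + μ := by
  unfold posRoot
  linear_combination Real.sq_sqrt (by positivity : 0 ≤ u ^ 2 + 4 * μ) / 4

lemma posRoot_sub_div (hμ : 0 < μ) (u : ℝ) : posRoot μ u - μ / posRoot μ u = u := by
  have := posRoot_pos hμ u
  field_simp
  linear_combination posRoot_sq hμ.le u

lemma posRoot_sub_div_self (hμ : 0 ≤ μ) {t : ℝ} (ht : 0 < t) : posRoot μ (t - μ / t) = t := by
  have hs : √((t - μ / t) ^ 2 + 4 * μ) = t + μ / t := by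
    rw [Real.sqrt_eq_iff_mul_self_eq_of_pos (by positivity)]
    field_simp
    ring
  rw [posRoot, hs]
  ring

lemma posRoot_cube_add_posRoot_neg_cube_div (hμ : 0 < μ) (u : ℝ) :
    (posRoot μ u ^ 3 + posRoot μ (-u) ^ 3) / √(u ^ 2 + 4 * μ) = u ^ 2 + μ := by
  rw [div_eq_iff (Real.sqrt_pos.2 (by positivity)).ne', posRoot, posRoot, neg_sq]
  linear_combination (√(u ^ 2 + 4 * μ) / 4) * Real.sq_sqrt (by positivity : 0 ≤ u ^ 2 + 4 * μ)

lemma hasDerivAt_posRoot (hμ : 0 < μ) (u : ℝ) :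
    HasDerivAt (posRoot μ) (posRoot μ u / √(u ^ 2 + 4 * μ)) u := by
  have h := ((hasDerivAt_id u).add
    (((hasDerivAt_pow 2 u).add_const (4 * μ)).sqrt (by positivity))).div_const 2
  refine h.congr_deriv ?_
  have : 0 < √(u ^ 2 + 4 * μ) := Real.sqrt_pos.2 (by positivity)
  simp only [posRoot, Nat.cast_ofNat]
  field_simp
  ring

lemma continuous_posRoot (hμ : 0 < μ) : Continuous (posRoot μ) :=
  continuous_iff_continuousAt.2 fun u => (hasDerivAt_posRoot hμ u).continuousAt

lemma injective_posRoot (hμ : 0 < μ) : Function.Injective (posRoot μ) :=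
  Function.LeftInverse.injective (g := fun t => t - μ / t) (posRoot_sub_div hμ)

lemma range_posRoot_sq (hμ : 0 < μ) : range (fun u => posRoot μ u ^ 2) = Ioi 0 := by
  refine (range_subset_iff.2 fun u => pow_pos (posRoot_pos hμ u) 2).antisymm
    fun x (hx : 0 < x) => ?_
  have hx' : 0 < √x := Real.sqrt_pos.2 hx
  exact ⟨√x - μ / √x, by simp only [posRoot_sub_div_self hμ.le hx', Real.sq_sqrt hx.le]⟩

lemma integral_Ioi_eq_integral_posRoot_sq (hμ : 0 < μ) (g : ℝ → ℝ) :
    ∫ x in Ioi 0, g x =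
      ∫ u, 2 * posRoot μ u ^ 2 / √(u ^ 2 + 4 * μ) * g (posRoot μ u ^ 2) := by
  have hderiv : ∀ u, HasDerivAt (fun u => posRoot μ u ^ 2)
      (2 * posRoot μ u ^ 2 / √(u ^ 2 + 4 * μ)) u := fun u => by
    refine ((hasDerivAt_posRoot hμ u).pow 2).congr_deriv ?_
    ring
  have hinj : InjOn (fun u => posRoot μ u ^ 2) univ := fun a _ b _ hab =>
    injective_posRoot hμ <|
      (pow_left_inj₀ (posRoot_pos hμ a).le (posRoot_pos hμ b).le two_ne_zero).1 hab
  rw [← range_posRoot_sq hμ, ← image_univ, integral_image_eq_integral_abs_deriv_smul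
    MeasurableSet.univ (fun u _ => (hderiv u).hasDerivWithinAt) hinj, setIntegral_univ]
  congr with u
  rw [abs_of_pos (by have := posRoot_pos hμ u; positivity), smul_eq_mul]

lemma sqrt_inv_mul_exp_posRoot_sq {k : ℝ} (hk : 0 < k) (hμ : 0 < μ) (u : ℝ) :
    (√(2 * π * k * posRoot μ u ^ 2))⁻¹ *
        exp (-(posRoot μ u ^ 2 - μ) ^ 2 / (2 * k * posRoot μ u ^ 2)) =
      gaussianPDFReal 0 k.toNNReal u / posRoot μ u := by
  have hψ := posRoot_pos hμ u
  have hexp : -(posRoot μ u ^ 2 - μ) ^ 2 / (2 * k * posRoot μ u ^ 2) = -(u - 0) ^ 2 / (2 * k) := by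
    rw [show posRoot μ u ^ 2 - μ = u * posRoot μ u by linear_combination posRoot_sq hμ.le u]
    field_simp
    ring
  rw [gaussianPDFReal, Real.coe_toNNReal _ hk.le, hexp, Real.sqrt_mul (by positivity),
    Real.sqrt_sq hψ.le]
  field_simp

end PosRoot

theorem unlikely_density_mean (k μ : ℝ) (hk : 0 < k) (hμ : 0 < μ) :
    ∫ x in Set.Ioi (0:ℝ),
      x * ((Real.sqrt (2 * Real.pi * k * x))⁻¹ * Real.exp (-(x - μ)^2 / (2 * k * x)))
      = k + μ := by
  set φ := gaussianPDFReal 0 k.toNNReal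
  have hv : k.toNNReal ≠ 0 := by simpa using hk
  set F : ℝ → ℝ := fun u => 2 * posRoot μ u ^ 3 / √(u ^ 2 + 4 * μ) * φ u
  have hF : ∀ u, F u + F (-u) = 2 * ((u ^ 2 + μ) * φ u) := fun u => by
    simp only [F, φ, gaussianPDFReal_zero_apply_neg, neg_sq]
    linear_combination 2 * φ u * posRoot_cube_add_posRoot_neg_cube_div hμ u
  have hFint : Integrable F := by
    have := continuous_posRoot hμ
    refine integrable_of_nonneg_of_add_comp_neg (Measurable.aestronglyMeasurable (by fun_prop))
      (fun u => ?_) (integrable_sq_add_const_mul_gaussianPDFReal hv μ) hF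
    have := posRoot_pos hμ u
    have := gaussianPDFReal_nonneg 0 k.toNNReal u
    positivity
  calc _ = ∫ u, F u := by
        rw [integral_Ioi_eq_integral_posRoot_sq hμ]
        congr with u
        have := posRoot_pos hμ u
        rw [sqrt_inv_mul_exp_posRoot_sq hk hμ]
        simp only [F, φ]
        field_simp
    _ = ∫ u, (u ^ 2 + μ) * φ u := integral_eq_of_add_comp_neg hFint hF
    _ = k + μ := by rw [integral_sq_add_const_mul_gaussianPDFReal hv, Real.coe_toNNReal _ hk.le]
end

section
/- For k, μ > 0 and any real t < 1/(2k), the moment generating function of the density f(x) = (2πkx)^{-1/2} exp(-(x-μ)²/(2kx)) on (0,∞) is M(t) = ∫₀^∞ e^{tx} f(x) dx = (1-2kt)^{-1/2} · exp((μ/k)(1 - √(1-2kt))). -/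
/-!
With `α = (1 - 2kt) / (2k)` and `β = μ² / (2k)` one has
`tx - (x - μ)² / (2kx) = μ / k - (αx + β / x)`, so the MGF is a constant multiple of
`∫₀^∞ x^(-1/2) exp (-(αx + β/x)) dx`. The substitution `x = y²` and completing the square
reduce this to `∫₀^∞ exp (-(√α y - √β / y)²) dy`, which is evaluated by Glasser's master
theorem: `y ↦ ay - b/y` maps `(0, ∞)` bijectively onto `ℝ` with Jacobian `a + b/y²`, and
the involution `y ↦ b/(ay)` reverses its sign, so for even integrable `f`,
`∫₀^∞ f (ay - b/y) dy = (2a)⁻¹ ∫ f`.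
-/

open Real MeasureTheory Set

section Glasser

variable {E : Type*} [NormedAddCommGroup E] [NormedSpace ℝ E] {a b : ℝ}

theorem hasDerivAt_mul_sub_div (a b : ℝ) {y : ℝ} (hy : y ≠ 0) :
    HasDerivAt (fun y => a * y - b / y) (a + b / y ^ 2) y := by
  have h := ((hasDerivAt_id' y).const_mul a).sub ((hasDerivAt_inv hy).const_mul b)
  simp only [mul_one, mul_neg, sub_neg_eq_add, ← div_eq_mul_inv] at h
  exact h

theorem strictMonoOn_mul_sub_div (ha : 0 < a) (hb : 0 ≤ b) :
    StrictMonoOn (fun y => a * y - b / y) (Ioi 0) := fun x hx y _ hxy => by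
  have : b / y ≤ b / x := div_le_div_of_nonneg_left hb hx hxy.le
  have : a * x < a * y := mul_lt_mul_of_pos_left hxy ha
  linarith

theorem image_mul_sub_div_Ioi (ha : 0 < a) (hb : 0 < b) :
    (fun y => a * y - b / y) '' Ioi 0 = univ := by
  refine eq_univ_of_forall fun u => ?_
  -- the positive root of `a y ^ 2 - u y - b`
  set s := √(u ^ 2 + 4 * a * b)
  have hs : s ^ 2 = u ^ 2 + 4 * a * b := sq_sqrt (by positivity)
  have hus : -u < s := by nlinarith [sqrt_nonneg (u ^ 2 + 4 * a * b)]
  have hy : 0 < (u + s) / (2 * a) := div_pos (by linarith) (by linarith)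
  have : u + s ≠ 0 := by linarith
  refine ⟨(u + s) / (2 * a), hy, ?_⟩
  field_simp
  linear_combination hs

theorem integral_Ioi_comp_mul_sub_div (ha : 0 < a) (hb : 0 < b) (f : ℝ → E) :
    ∫ y in Ioi 0, (a + b / y ^ 2) • f (a * y - b / y) = ∫ u, f u := by
  have h := integral_image_eq_integral_abs_deriv_smul measurableSet_Ioi
    (fun y hy => (hasDerivAt_mul_sub_div a b (ne_of_gt hy)).hasDerivWithinAt)
    (strictMonoOn_mul_sub_div ha hb.le).injOn f
  rw [image_mul_sub_div_Ioi ha hb, Measure.restrict_univ] at h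
  rw [h]
  refine setIntegral_congr_fun measurableSet_Ioi fun y _ => ?_
  rw [abs_of_pos (by positivity)]

theorem integrableOn_Ioi_comp_mul_sub_div_iff (ha : 0 < a) (hb : 0 < b) (f : ℝ → E) :
    IntegrableOn (fun y => (a + b / y ^ 2) • f (a * y - b / y)) (Ioi 0) ↔ Integrable f := by
  have h := integrableOn_image_iff_integrableOn_abs_deriv_smul measurableSet_Ioi
    (fun y hy => (hasDerivAt_mul_sub_div a b (ne_of_gt hy)).hasDerivWithinAt)
    (strictMonoOn_mul_sub_div ha hb.le).injOn f
  rw [image_mul_sub_div_Ioi ha hb, integrableOn_univ] at h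
  rw [h]
  refine integrableOn_congr_fun (fun y _ => ?_) measurableSet_Ioi
  rw [abs_of_pos (by positivity)]

theorem integral_Ioi_comp_div {c : ℝ} (hc : 0 < c) (g : ℝ → E) :
    ∫ y in Ioi 0, (c / y ^ 2) • g (c / y) = ∫ y in Ioi 0, g y := by
  have himage : (fun y => c / y) '' Ioi 0 = Ioi 0 := by
    refine Subset.antisymm (image_subset_iff.2 fun y hy => div_pos hc hy) fun y hy => ?_
    exact ⟨c / y, div_pos hc hy, div_div_cancel₀ hc.ne'⟩
  have hderiv : ∀ y ∈ Ioi (0 : ℝ),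
      HasDerivWithinAt (fun y => c / y) (-(c / y ^ 2)) (Ioi 0) y := fun y hy => by
    simpa only [div_eq_mul_inv, mul_neg] using
      ((hasDerivAt_inv (ne_of_gt hy)).const_mul c).hasDerivWithinAt
  have hinj : InjOn (fun y => c / y) (Ioi 0) :=
    StrictAntiOn.injOn fun x hx y _ hxy => div_lt_div_of_pos_left hc hx hxy
  conv_rhs =>
    rw [← himage, integral_image_eq_integral_abs_deriv_smul measurableSet_Ioi hderiv hinj]
  refine setIntegral_congr_fun measurableSet_Ioi fun y (hy : 0 < y) => ?_
  rw [abs_neg, abs_of_pos (by positivity)]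

theorem integral_Ioi_comp_mul_sub_div_of_even (ha : 0 < a) (hb : 0 < b) {f : ℝ → E}
    (hf : Integrable f) (heven : ∀ u, f (-u) = f u) :
    ∫ y in Ioi 0, f (a * y - b / y) = (2 * a)⁻¹ • ∫ u, f u := by
  set F := fun y => f (a * y - b / y)
  have hweighted : IntegrableOn (fun y => (a + b / y ^ 2) • F y) (Ioi 0) :=
    (integrableOn_Ioi_comp_mul_sub_div_iff ha hb f).2 hf
  have hF : IntegrableOn F (Ioi 0) := by
    refine IntegrableOn.congr_fun (hweighted.bdd_smul a⁻¹ (φ := fun y => (a + b / y ^ 2)⁻¹)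
      (Measurable.aestronglyMeasurable (by fun_prop)) ?_)
      (fun y (hy : 0 < y) => inv_smul_smul₀ (by positivity) (F y)) measurableSet_Ioi
    filter_upwards [ae_restrict_mem measurableSet_Ioi] with y (hy : 0 < y)
    rw [norm_inv, Real.norm_of_nonneg (by positivity)]
    exact inv_anti₀ ha (le_add_of_nonneg_right (by positivity))
  -- `y ↦ b / (a y)` maps `a y - b / y` to its negative
  have hreflect : ∫ y in Ioi 0, F y = ∫ y in Ioi 0, (b / a / y ^ 2) • F y := by
    rw [← integral_Ioi_comp_div (div_pos hb ha)]
    refine setIntegral_congr_fun measurableSet_Ioi fun y (hy : 0 < y) => ?_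
    change _ • f (a * (b / a / y) - b / (b / a / y)) = _ • f (a * y - b / y)
    rw [← heven]
    congr 2
    field_simp
    ring
  have hsplit : ∀ y ∈ Ioi (0 : ℝ),
      (a + b / y ^ 2) • F y = a • F y + a • (b / a / y ^ 2) • F y := fun y _ => by
    rw [smul_smul, ← add_smul]
    field_simp
  have hF' : IntegrableOn (fun y => (b / a / y ^ 2) • F y) (Ioi 0) := by
    refine IntegrableOn.congr_fun ((hweighted.sub (hF.smul a)).smul a⁻¹) (fun y hy => ?_)
      measurableSet_Ioi
    simp only [Pi.smul_apply, Pi.sub_apply, hsplit y hy, add_sub_cancel_left,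
      inv_smul_smul₀ ha.ne']
  calc ∫ y in Ioi 0, F y
      = (2 * a)⁻¹ • ((a • ∫ y in Ioi 0, F y) + a • ∫ y in Ioi 0, F y) := by
        rw [← two_smul ℝ, smul_smul, smul_smul,
          show (2 * a)⁻¹ * 2 * a = 1 by field_simp, one_smul]
    _ = (2 * a)⁻¹ • ∫ y in Ioi 0, (a + b / y ^ 2) • F y := by
        rw [setIntegral_congr_fun measurableSet_Ioi hsplit,
          integral_add (f := fun y => a • F y) (g := fun y => a • (b / a / y ^ 2) • F y)
            (hF.smul a) (hF'.smul a),
          integral_smul, integral_smul, ← hreflect]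
    _ = (2 * a)⁻¹ • ∫ u, f u := by rw [integral_Ioi_comp_mul_sub_div ha hb]

end Glasser

theorem integral_Ioi_exp_neg_sq_mul_sub_div {a b : ℝ} (ha : 0 < a) (hb : 0 < b) :
    ∫ y in Ioi 0, exp (-(a * y - b / y) ^ 2) = √π / (2 * a) := by
  have hgauss : ∫ u, exp (-u ^ 2) = √π := by simpa using integral_gaussian 1
  rw [integral_Ioi_comp_mul_sub_div_of_even ha hb (f := fun u => exp (-u ^ 2))
    (by simpa using integrable_exp_neg_mul_sq one_pos) (fun u => by simp), hgauss, smul_eq_mul,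
    inv_mul_eq_div]

theorem integral_Ioi_inv_sqrt_mul_exp_neg_mul_add_div {α β : ℝ} (hα : 0 < α) (hβ : 0 < β) :
    ∫ x in Ioi 0, (√x)⁻¹ * exp (-(α * x + β / x))
      = √(π / α) * exp (-2 * √(α * β)) := by
  rw [← integral_comp_rpow_Ioi_of_pos two_pos]
  have hsquare : ∀ y ∈ Ioi (0 : ℝ), ((2 : ℝ) * y ^ ((2 : ℝ) - 1)) •
      ((√(y ^ (2 : ℝ)))⁻¹ * exp (-(α * y ^ (2 : ℝ) + β / y ^ (2 : ℝ))))
      = 2 * exp (-2 * √(α * β)) * exp (-(√α * y - √β / y) ^ 2) := by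
    intro y (hy : 0 < y)
    have hexp : -(α * y ^ 2 + β / y ^ 2) = -2 * √(α * β) + -(√α * y - √β / y) ^ 2 := by
      rw [sqrt_mul hα.le]
      field_simp
      linear_combination y ^ 4 * sq_sqrt hα.le + sq_sqrt hβ.le
    rw [rpow_two, show (2 : ℝ) - 1 = 1 by norm_num, rpow_one, sqrt_sq hy.le, hexp, exp_add,
      smul_eq_mul]
    field_simp
  rw [setIntegral_congr_fun measurableSet_Ioi hsquare, integral_const_mul,
    integral_Ioi_exp_neg_sq_mul_sub_div (sqrt_pos.2 hα) (sqrt_pos.2 hβ), sqrt_div pi_nonneg]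
  field_simp

theorem exp_mul_mul_density_eq {k μ x : ℝ} (t : ℝ) (hk : 0 < k) (hx : 0 < x) :
    exp (t * x) * ((√(2 * π * k * x))⁻¹ * exp (-(x - μ) ^ 2 / (2 * k * x)))
      = ((√(2 * π * k))⁻¹ * exp (μ / k)) *
        ((√x)⁻¹ * exp (-((1 - 2 * k * t) / (2 * k) * x + μ ^ 2 / (2 * k) / x))) := by
  have hexp : t * x + -(x - μ) ^ 2 / (2 * k * x)
      = μ / k + -((1 - 2 * k * t) / (2 * k) * x + μ ^ 2 / (2 * k) / x) := by
    field_simp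
    ring
  rw [sqrt_mul (by positivity) x, mul_inv, mul_mul_mul_comm _ (exp (μ / k)), ← exp_add, ← hexp,
    exp_add]
  ring

theorem unlikely_density_mgf (k μ : ℝ) (hk : 0 < k) (hμ : 0 < μ) (t : ℝ)
    (ht : t < 1 / (2 * k)) :
    ∫ x in Set.Ioi (0:ℝ),
      Real.exp (t * x) *
        ((Real.sqrt (2 * Real.pi * k * x))⁻¹ * Real.exp (-(x - μ)^2 / (2 * k * x)))
      = (Real.sqrt (1 - 2 * k * t))⁻¹ *
          Real.exp ((μ / k) * (1 - Real.sqrt (1 - 2 * k * t))) := by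
  have hs : 0 < 1 - 2 * k * t := by
    rw [lt_div_iff₀ (by positivity)] at ht
    linarith
  rw [setIntegral_congr_fun measurableSet_Ioi fun x hx => exp_mul_mul_density_eq t hk hx,
    integral_const_mul, integral_Ioi_inv_sqrt_mul_exp_neg_mul_add_div (by positivity)
      (by positivity)]
  have hsqrt_div :
      √(π / ((1 - 2 * k * t) / (2 * k))) = √(2 * π * k) / √(1 - 2 * k * t) := by
    rw [← sqrt_div (by positivity)]
    field_simp
  have hsqrt_mul : √((1 - 2 * k * t) / (2 * k) * (μ ^ 2 / (2 * k)))
      = μ / (2 * k) * √(1 - 2 * k * t) := by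
    rw [show (1 - 2 * k * t) / (2 * k) * (μ ^ 2 / (2 * k)) = (μ / (2 * k)) ^ 2 * (1 - 2 * k * t)
      by ring, sqrt_mul (sq_nonneg _), sqrt_sq (by positivity)]
  have hexponent :
      μ / k * (1 - √(1 - 2 * k * t)) = μ / k + -2 * (μ / (2 * k) * √(1 - 2 * k * t)) := by
    field_simp
    ring
  rw [hsqrt_div, hsqrt_mul, hexponent, exp_add]
  field_simp
end
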